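/- Let q be an odd prime power, let α ∈ F_{q⁴} generate F_{q⁴} over F_q, and let Ψ ∈ PGL₂(F_{q⁴}) satisfy ΨΓΨ⁻¹ = [[−1,0],[0,1]] where Γ ∈ PGL₂(F_q) is the involution swapping α with α^{q²} and α^q with α^{q³}. Then Ψ(α)^{q²} = −Ψ(α), and consequently Ψ(α)^{q²−1} = −1, so the multiplicative order of Ψ(α) divides 2(q²−1) and is even. -/

import Mathlib

open Matrix
open scoped LinearAlgebra.Projectivization

/-!
Let `σ` be the `q²`-power Frobenius of `K`. It fixes the entries of `Ψ`, so `Ψ(σ x) = σ(Ψ x)`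
on points, and `σ α = Γ α`; hence `σ(Ψ α) = Ψ(Γ α) = D(Ψ α)` with `D = ΨΓΨ⁻¹ : z ↦ -z`.
The two fixed points `0, ∞` of `D` are excluded for `Ψ α`, since otherwise `Ψ(σ α) = Ψ α`.
So `Ψ α = β ∈ Kˣ` with `β ^ q² = σ β = -β`, i.e. `β ^ (q² - 1) = -1`, which has order `2`
because `K` has odd characteristic; this makes the order of `β` even and a divisor of `2(q² - 1)`.
-/

/-- The Möbius action of `GL(2,K)` on the projective line `ℙ K (Fin 2 → K)`.
Since scalar matrices act trivially, this realizes the action of `PGL₂(K)`. -/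
noncomputable def mobius {K : Type*} [Field K] (M : GL (Fin 2) K)
    (p : ℙ K (Fin 2 → K)) : ℙ K (Fin 2 → K) :=
  Projectivization.map
    (LinearMap.GeneralLinearGroup.toLinearEquiv
      (Matrix.GeneralLinearGroup.toLin M)).toLinearMap
    (LinearEquiv.injective _) p

/-- The point `[x : 1]` of the projective line. -/
noncomputable def pt {K : Type*} [Field K] (x : K) : ℙ K (Fin 2 → K) :=
  Projectivization.mk K ![x, 1] (by
    intro h
    simpa using congrFun h 1)

theorem Matrix.mulVec_ne_zero_of_isUnit {R n : Type*} [Semiring R] [Fintype n] [DecidableEq n]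
    {M : Matrix n n R} (hM : IsUnit M) {v : n → R} (hv : v ≠ 0) : M *ᵥ v ≠ 0 :=
  mulVec_zero M ▸ (mulVec_injective_of_isUnit hM).ne hv

theorem Matrix.mulVec_comp_ringHom {R m n : Type*} [CommSemiring R] [Fintype n] (σ : R →+* R)
    {M : Matrix m n R} (hM : ∀ i j, σ (M i j) = M i j) (v : n → R) :
    M *ᵥ (σ ∘ v) = σ ∘ (M *ᵥ v) := by
  ext i
  rw [Function.comp_apply, RingHom.map_mulVec]
  congr
  ext i j
  exact (hM i j).symm

section Mobius

open Projectivization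

variable {K : Type*} [Field K]

theorem mobius_mk (M : GL (Fin 2) K) {v : Fin 2 → K} (hv : v ≠ 0) :
    mobius M (mk K v hv) =
      mk K ((M : Matrix (Fin 2) (Fin 2) K) *ᵥ v)
        (mulVec_ne_zero_of_isUnit M.isUnit hv) :=
  rfl

theorem mobius_pt (M : GL (Fin 2) K) (x : K) :
    mobius M (pt x) = mk K ((M : Matrix (Fin 2) (Fin 2) K) *ᵥ ![x, 1])
      (mulVec_ne_zero_of_isUnit M.isUnit (by simp [funext_iff])) :=
  rfl

theorem mobius_mul (M N : GL (Fin 2) K) (p : ℙ K (Fin 2 → K)) :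
    mobius (M * N) p = mobius M (mobius N p) := by
  induction p using ind with
  | h v hv => simp only [mobius_mk, Units.val_mul, ← mulVec_mulVec]

theorem mobius_injective (M : GL (Fin 2) K) : Function.Injective (mobius M) :=
  map_injective _ (LinearEquiv.injective _)

theorem pt_injective : Function.Injective (pt (K := K)) := by
  intro x y h
  obtain ⟨a, ha⟩ := (mk_eq_mk_iff' K _ _ _ _).mp h
  have ha1 : a = 1 := by simpa using congrFun ha 1
  simpa [ha1] using (congrFun ha 0).symm

theorem exists_mk_eq_pt_and_map_eq_neg (σ : K →+* K) {v : Fin 2 → K} (hv : v ≠ 0)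
    (hneg : ∃ a : K, a • ![-v 0, v 1] = σ ∘ v) (hne : ¬∃ a : K, a • v = σ ∘ v) :
    ∃ β : K, β ≠ 0 ∧ mk K v hv = pt β ∧ σ β = -β := by
  obtain ⟨a, ha⟩ := hneg
  have ha0 : σ (v 0) = -(a * v 0) := by simpa using (congrFun ha 0).symm
  have ha1 : σ (v 1) = a * v 1 := by simpa using (congrFun ha 1).symm
  -- if a coordinate of `v` vanishes, then `![-v 0, v 1] = ±v`
  have hv1 : v 1 ≠ 0 := fun h =>
    hne ⟨-a, by simp [funext_iff, Fin.forall_fin_two, ha0, h]⟩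
  have hv0 : v 0 ≠ 0 := fun h =>
    hne ⟨a, by simp [funext_iff, Fin.forall_fin_two, ha1, h]⟩
  have hσv1 : a * v 1 ≠ 0 := ha1 ▸ (map_ne_zero σ).mpr hv1
  refine ⟨v 0 / v 1, div_ne_zero hv0 hv1, ?_, ?_⟩
  · exact (mk_eq_mk_iff' K _ _ _ _).mpr
      ⟨v 1, by simp [funext_iff, Fin.forall_fin_two, mul_div_cancel₀ _ hv1]⟩
  · rw [map_div₀, ha0, ha1, neg_div, mul_div_mul_left _ _ (left_ne_zero_of_mul hσv1)]

theorem exists_mobius_pt_eq_pt_and_map_eq_neg (σ : K →+* K) {Ψ Γ : GL (Fin 2) K}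
    (hΨ : ∀ i j, σ ((Ψ : Matrix (Fin 2) (Fin 2) K) i j) = (Ψ : Matrix (Fin 2) (Fin 2) K) i j)
    {c : Kˣ} (hconj : ((Ψ * Γ * Ψ⁻¹ : GL (Fin 2) K) : Matrix (Fin 2) (Fin 2) K) =
      (c : K) • !![(-1 : K), 0; 0, 1])
    {x : K} (hΓ : mobius Γ (pt x) = pt (σ x)) (hx : σ x ≠ x) :
    ∃ β : K, β ≠ 0 ∧ mobius Ψ (pt x) = pt β ∧ σ β = -β := by
  set v := (Ψ : Matrix (Fin 2) (Fin 2) K) *ᵥ ![x, 1]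
  have hΨσx : mobius Ψ (pt (σ x)) = mobius (Ψ * Γ * Ψ⁻¹) (mobius Ψ (pt x)) := by
    rw [← mobius_mul, inv_mul_cancel_right, mobius_mul, hΓ]
  have hσv : (Ψ : Matrix (Fin 2) (Fin 2) K) *ᵥ ![σ x, 1] = σ ∘ v := by
    rw [← mulVec_comp_ringHom σ hΨ]
    simp
  have hv : v ≠ 0 := mulVec_ne_zero_of_isUnit Ψ.isUnit (by simp [funext_iff])
  have hneg : ∃ a : K, a • ![-v 0, v 1] = σ ∘ v := by
    rw [mobius_pt, mobius_pt, mobius_mk, mk_eq_mk_iff'] at hΨσx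
    obtain ⟨a, ha⟩ := hΨσx
    rw [hconj, smul_mulVec, smul_smul, hσv] at ha
    refine ⟨a * c, ha ▸ congrArg _ ?_⟩
    simp [v, funext_iff, Fin.forall_fin_two, add_comm]
  have hne : ¬∃ a : K, a • v = σ ∘ v := by
    rintro ⟨a, ha⟩
    refine hx (pt_injective (mobius_injective Ψ ?_))
    rw [mobius_pt, mobius_pt, mk_eq_mk_iff']
    exact ⟨a, ha.trans hσv.symm⟩
  exact exists_mk_eq_pt_and_map_eq_neg σ hv hneg hne

end Mobius

theorem FiniteField.exists_ringHom_eq_pow_of_card_eq_pow {K : Type*} [Field K] [Fintype K]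
    {q k : ℕ} (hK : Fintype.card K = q ^ k) (hk : k ≠ 0) :
    ∃ φ : K →+* K, ∀ x, φ x = x ^ q := by
  obtain ⟨p, hp⟩ := CharP.exists K
  obtain ⟨n, hprime, hn⟩ := FiniteField.card K p
  have := Fact.mk hprime
  obtain ⟨m, -, rfl⟩ := (Nat.dvd_prime_pow hprime).mp (hn ▸ hK ▸ dvd_pow_self q hk)
  exact ⟨iterateFrobenius K p m, fun x => iterateFrobenius_def p m x⟩

theorem orderOf_dvd_two_mul_and_even_of_orderOf_pow_eq_two {G : Type*} [Monoid G] {x : G} {n : ℕ}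
    (h : orderOf (x ^ n) = 2) : orderOf x ∣ 2 * n ∧ Even (orderOf x) := by
  refine ⟨orderOf_dvd_of_pow_eq_one ?_, even_iff_two_dvd.mpr (h ▸ orderOf_pow_dvd n)⟩
  rw [mul_comm, pow_mul, ← h, pow_orderOf_eq_one]

theorem psi_alpha_power_order_general
    (q : ℕ) (hq : Odd q)
    {K : Type*} [Field K] [Fintype K]
    (hK : Fintype.card K = q ^ 4)
    (α : K) (hgen : α ^ q ^ 2 ≠ α)
    (Γ : GL (Fin 2) K)
    (hΓ₁ : mobius Γ (pt α) = pt (α ^ q ^ 2))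
    (Ψ : GL (Fin 2) K)
    (hΨrat : ∀ i j, ((Ψ : Matrix (Fin 2) (Fin 2) K) i j) ^ q ^ 2 =
      (Ψ : Matrix (Fin 2) (Fin 2) K) i j)
    (hconj : ∃ c : Kˣ,
      ((Ψ * Γ * Ψ⁻¹ : GL (Fin 2) K) : Matrix (Fin 2) (Fin 2) K) =
        (c : K) • !![(-1 : K), 0; 0, 1]) :
    ∃ β : Kˣ, mobius Ψ (pt α) = pt (β : K) ∧
      (β : K) ^ q ^ 2 = -(β : K) ∧
      (β : K) ^ (q ^ 2 - 1) = -1 ∧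
      orderOf β ∣ 2 * (q ^ 2 - 1) ∧ Even (orderOf β) := by
  obtain ⟨φ, hφ⟩ := FiniteField.exists_ringHom_eq_pow_of_card_eq_pow
    (hK.trans (pow_mul q 2 2)) two_ne_zero
  obtain ⟨c, hc⟩ := hconj
  obtain ⟨β, hβ0, hΨα, hβ⟩ := exists_mobius_pt_eq_pt_and_map_eq_neg φ
    (fun i j => (hφ _).trans (hΨrat i j)) hc (by rwa [hφ]) (by rwa [hφ])
  rw [hφ] at hβ
  have hpow : β ^ (q ^ 2 - 1) = -1 := by
    rw [pow_sub₀ β hβ0 (Nat.one_le_iff_ne_zero.mpr (pow_ne_zero 2 hq.pos.ne')), hβ, pow_one,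
      neg_mul, mul_inv_cancel₀ hβ0]
  have hchar : ringChar K ≠ 2 := by
    rw [Ne, FiniteField.even_card_iff_char_two, hK, Nat.odd_iff.mp hq.pow]
    exact one_ne_zero
  have horder : orderOf (Units.mk0 β hβ0 ^ (q ^ 2 - 1)) = 2 := by
    rw [← orderOf_units, Units.val_pow_eq_pow_val, Units.val_mk0, hpow, orderOf_neg_one,
      if_neg hchar]
  exact ⟨Units.mk0 β hβ0, hΨα, hβ, hpow, orderOf_dvd_two_mul_and_even_of_orderOf_pow_eq_two horder⟩

/-- Let `q` be an odd prime power, `K = F_{q⁴}`, and `α` a generator of `K` over `F_q`.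
Let `Γ` be the involution of `PGL₂(F_q)` (represented by a matrix with entries fixed by
the `q`-power Frobenius) swapping `α` with `α^{q²}` and `α^q` with `α^{q³}`, and let `Ψ`
be an element of `PGL₂(F_{q⁴})` with `F_{q²}`-rational entries satisfying
`ΨΓΨ⁻¹ = [[−1,0],[0,1]]` in `PGL₂`.  Then `Ψ(α)` is a finite point `β` with
`β^{q²} = −β`; consequently `β^{q²−1} = −1`, so the multiplicative order of `β` divides
`2(q²−1)` and is even. -/
theorem psi_alpha_power_order
    (q : ℕ) (hq : Odd q) (hq1 : 1 < q)
    {K : Type*} [Field K] [Fintype K]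
    (hK : Fintype.card K = q ^ 4)
    (α : K) (hgen : α ^ q ^ 2 ≠ α)
    (Γ : GL (Fin 2) K)
    (hΓrat : ∀ i j, ((Γ : Matrix (Fin 2) (Fin 2) K) i j) ^ q =
      (Γ : Matrix (Fin 2) (Fin 2) K) i j)
    (hΓ₁ : mobius Γ (pt α) = pt (α ^ q ^ 2))
    (hΓ₂ : mobius Γ (pt (α ^ q ^ 2)) = pt α)
    (hΓ₃ : mobius Γ (pt (α ^ q)) = pt (α ^ q ^ 3))
    (hΓ₄ : mobius Γ (pt (α ^ q ^ 3)) = pt (α ^ q))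
    (hΓinv : ∀ p, mobius Γ (mobius Γ p) = p)
    (Ψ : GL (Fin 2) K)
    (hΨrat : ∀ i j, ((Ψ : Matrix (Fin 2) (Fin 2) K) i j) ^ q ^ 2 =
      (Ψ : Matrix (Fin 2) (Fin 2) K) i j)
    (hconj : ∃ c : Kˣ,
      ((Ψ * Γ * Ψ⁻¹ : GL (Fin 2) K) : Matrix (Fin 2) (Fin 2) K) =
        (c : K) • !![(-1 : K), 0; 0, 1]) :
    ∃ β : Kˣ, mobius Ψ (pt α) = pt (β : K) ∧
      (β : K) ^ q ^ 2 = -(β : K) ∧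
      (β : K) ^ (q ^ 2 - 1) = -1 ∧
      orderOf β ∣ 2 * (q ^ 2 - 1) ∧ Even (orderOf β) :=
  psi_alpha_power_order_general q hq hK α hgen Γ hΓ₁ Ψ hΨrat hconj
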